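/- Let μ(dx) = Z^{-1} e^{-V(x)} dx be a probability measure on ℝ with ∫ x dμ = 0, where V attains its minimum at a ∈ ℝ. Suppose V is β-superlinear with constants c_β > 0 and h_β ≥ 0, associated with the numbers R₊(β), R₋(β) > 0 and R(β) = max(R₊(β), R₋(β)). Then the location a of the minimum satisfies a² ≤ 4 · Var_μ(x) · e^{β} · ( 1 + 2 e^{h_β}/c_β ). -/

import Mathlib

/-!
On the sublevel interval `I = [a - R₋, a + R₊]` the density `e^{-V}` is at least
`e^{-V(a) - β}`, and an interval of length `L` containing `a` carries `∫ x² ≥ L a² / 4`; hence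
`∫ x² e^{-V} ≥ e^{-V(a) - β} (R₊ + R₋) a² / 4`. Conversely `e^{-V} ≤ e^{-V(a)}` on `I`, and
superlinearity makes both tails exponentially small, so
`Z ≤ e^{-V(a)} (R₊ + R₋ + 2 e^h R / c) ≤ e^{-V(a)} (R₊ + R₋) (1 + 2 e^h / c)`.
As `μ` is centred, `Var_μ(x) = Z⁻¹ ∫ x² e^{-V}`, and the two bounds combine.
-/

open MeasureTheory Set Real

lemma integrable_exp_neg_mul_abs_sub {k : ℝ} (hk : 0 < k) (a : ℝ) :
    Integrable fun x => exp (-(k * |x - a|)) := by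
  suffices Integrable fun x => exp (-(k * |x|)) from this.comp_sub_right a
  rw [← integrableOn_univ, ← Iic_union_Ioi (a := 0)]
  refine ((integrableOn_exp_mul_Iic hk 0).congr_fun (fun x hx => ?_) measurableSet_Iic).union
    ((exp_neg_integrableOn_Ioi 0 hk).congr_fun (fun x hx => ?_) measurableSet_Ioi)
  · simp only [abs_of_nonpos (mem_Iic.1 hx), mul_neg, neg_neg]
  · simp only [abs_of_pos (mem_Ioi.1 hx), neg_mul]

lemma sq_le_mul_exp_mul_abs (x : ℝ) {t : ℝ} (ht : 0 < t) :
    x ^ 2 ≤ 2 / t ^ 2 * exp (t * |x|) := by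
  have := pow_div_factorial_le_exp _ (mul_nonneg ht.le (abs_nonneg x)) 2
  rw [mul_pow, sq_abs, Nat.factorial_two, Nat.cast_two] at this
  rw [div_mul_eq_mul_div, le_div_iff₀ (by positivity)]
  linarith

lemma integrable_sq_mul_of_abs_le_exp {g : ℝ → ℝ} (hg : AEStronglyMeasurable g) {C k a : ℝ}
    (hk : 0 < k) (hbound : ∀ x, |g x| ≤ C * exp (-(k * |x - a|))) :
    Integrable fun x => x ^ 2 * g x := by
  have hC : 0 ≤ C := nonneg_of_mul_nonneg_left ((abs_nonneg _).trans (hbound 0)) (exp_pos _)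
  refine ((integrable_exp_neg_mul_abs_sub (half_pos hk) a).const_mul
    (8 / k ^ 2 * exp (k / 2 * |a|) * C)).mono' (by fun_prop) (.of_forall fun x => ?_)
  have hx : |x| ≤ |a| + |x - a| := by linarith [abs_sub_abs_le_abs_sub x a]
  calc ‖x ^ 2 * g x‖ = x ^ 2 * |g x| := by
        rw [norm_mul, norm_pow, Real.norm_eq_abs, Real.norm_eq_abs, sq_abs]
    _ ≤ 2 / (k / 2) ^ 2 * exp (k / 2 * |x|) * (C * exp (-(k * |x - a|))) := by
        gcongr
        exacts [sq_le_mul_exp_mul_abs x (half_pos hk), hbound x]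
    _ ≤ 2 / (k / 2) ^ 2 * exp (k / 2 * (|a| + |x - a|)) * (C * exp (-(k * |x - a|))) := by
        gcongr
    _ = 8 / k ^ 2 * exp (k / 2 * |a|) * C * exp (-(k / 2 * |x - a|)) := by
        have hexp : exp (k / 2 * (|a| + |x - a|)) * exp (-(k * |x - a|))
            = exp (k / 2 * |a|) * exp (-(k / 2 * |x - a|)) := by
          rw [← exp_add, ← exp_add]; ring_nf
        linear_combination (8 / k ^ 2 * C) * hexp

lemma setIntegral_Ioi_le_of_le_exp {g : ℝ → ℝ} {u C k : ℝ} (hg : IntegrableOn g (Ioi u))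
    (hk : 0 < k) (hbound : ∀ x > u, g x ≤ C * exp (-(k * (x - u)))) :
    ∫ x in Ioi u, g x ≤ C / k := by
  have hexp : ∀ x, C * exp (-(k * (x - u))) = C * exp (k * u) * exp (-k * x) := fun x => by
    rw [mul_assoc, ← exp_add]; ring_nf
  calc ∫ x in Ioi u, g x ≤ ∫ x in Ioi u, C * exp (k * u) * exp (-k * x) :=
        setIntegral_mono_on hg ((exp_neg_integrableOn_Ioi u hk).const_mul _) measurableSet_Ioi
          fun x hx => (hbound x hx).trans_eq (hexp x)
    _ = C / k := by
        rw [integral_const_mul, integral_exp_mul_Ioi (neg_lt_zero.2 hk), neg_div_neg_eq,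
          ← mul_div_assoc, mul_assoc, ← exp_add]
        simp

lemma setIntegral_Iic_le_of_le_exp {g : ℝ → ℝ} {l C k : ℝ} (hg : IntegrableOn g (Iic l))
    (hk : 0 < k) (hbound : ∀ x ≤ l, g x ≤ C * exp (k * (x - l))) :
    ∫ x in Iic l, g x ≤ C / k := by
  have hexp : ∀ x, C * exp (k * (x - l)) = C * exp (-(k * l)) * exp (k * x) := fun x => by
    rw [mul_assoc, ← exp_add]; ring_nf
  calc ∫ x in Iic l, g x ≤ ∫ x in Iic l, C * exp (-(k * l)) * exp (k * x) :=
        setIntegral_mono_on hg ((integrableOn_exp_mul_Iic hk l).const_mul _) measurableSet_Iic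
          fun x hx => (hbound x hx).trans_eq (hexp x)
    _ = C / k := by
        rw [integral_const_mul, integral_exp_mul_Iic hk, ← mul_div_assoc, mul_assoc, ← exp_add]
        simp

lemma setIntegral_Ioc_le_of_le_const {g : ℝ → ℝ} {l u M : ℝ} (hg : IntegrableOn g (Ioc l u))
    (hlu : l ≤ u) (hbound : ∀ x ∈ Ioc l u, g x ≤ M) :
    ∫ x in Ioc l u, g x ≤ M * (u - l) := by
  calc ∫ x in Ioc l u, g x ≤ ∫ _ in Ioc l u, M :=
        setIntegral_mono_on hg (integrableOn_const measure_Ioc_lt_top.ne) measurableSet_Ioc hbound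
    _ = M * (u - l) := by
        rw [setIntegral_const, Real.volume_real_Ioc_of_le hlu, smul_eq_mul, mul_comm]

lemma integral_le_of_le_exp_tails {g : ℝ → ℝ} (hg : Integrable g) {l u M C k : ℝ}
    (hlu : l ≤ u) (hk : 0 < k) (hleft : ∀ x ≤ l, g x ≤ C * exp (k * (x - l)))
    (hmid : ∀ x ∈ Ioc l u, g x ≤ M) (hright : ∀ x > u, g x ≤ C * exp (-(k * (x - u)))) :
    ∫ x, g x ≤ M * (u - l) + 2 * C / k := by
  rw [← intervalIntegral.integral_Iic_add_Ioi hg.integrableOn hg.integrableOn,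
    ← Ioc_union_Ioi_eq_Ioi hlu,
    setIntegral_union Ioc_disjoint_Ioi_same measurableSet_Ioi hg.integrableOn hg.integrableOn]
  have h2C : 2 * C / k = C / k + C / k := by ring
  linarith [setIntegral_Iic_le_of_le_exp hg.integrableOn hk hleft,
    setIntegral_Ioc_le_of_le_const hg.integrableOn hlu hmid,
    setIntegral_Ioi_le_of_le_exp hg.integrableOn hk hright]

lemma mul_sq_div_four_le_integral_sq {l u a : ℝ} (hla : l ≤ a) (hau : a ≤ u) :
    (u - l) * a ^ 2 / 4 ≤ ∫ x in Icc l u, x ^ 2 := by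
  rw [integral_Icc_eq_integral_Ioc, ← intervalIntegral.integral_of_le (hla.trans hau),
    integral_pow]
  nlinarith [mul_nonneg (sub_nonneg.2 hau) (sq_nonneg (3 * a + 2 * (u - a))),
    mul_nonneg (sub_nonneg.2 hla) (sq_nonneg (3 * a - 2 * (a - l)))]

lemma integral_withDensity_ofReal {X : Type*} [MeasurableSpace X] {μ : Measure X} {f : X → ℝ}
    (hf : Measurable f) (hf0 : ∀ x, 0 ≤ f x) (g : X → ℝ) :
    ∫ x, g x ∂μ.withDensity (fun x => ENNReal.ofReal (f x)) = ∫ x, f x * g x ∂μ := by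
  rw [integral_withDensity_eq_integral_toReal_smul hf.ennreal_ofReal
    (.of_forall fun _ => ENNReal.ofReal_lt_top)]
  simp only [ENNReal.toReal_ofReal (hf0 _), smul_eq_mul]

section Superlinear

variable {V : ℝ → ℝ} {a β k h Rp Rm : ℝ}

lemma apply_le_add_of_mem_Icc (hlevp : ∀ u, 0 ≤ u → u ≤ Rp → V (a + u) - V a ≤ β)
    (hlevm : ∀ u, 0 ≤ u → u ≤ Rm → V (a - u) - V a ≤ β) {x : ℝ}
    (hx : x ∈ Icc (a - Rm) (a + Rp)) : V x ≤ V a + β := by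
  rcases le_total a x with hax | hxa
  · have := hlevp (x - a) (by linarith) (by linarith [hx.2])
    rw [add_sub_cancel] at this
    linarith
  · have := hlevm (a - x) (by linarith) (by linarith [hx.1])
    rw [sub_sub_cancel] at this
    linarith

lemma add_mul_abs_sub_le_apply (hmin : ∀ x, V a ≤ V x)
    (hsupp : ∀ t, Rp ≤ t → k * t - h ≤ V (a + t) - V a)
    (hsupm : ∀ t, Rm ≤ t → k * t - h ≤ V (a - t) - V a) (hk : 0 ≤ k) (x : ℝ) :
    V a + k * |x - a| - max (k * max Rp Rm) h ≤ V x := by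
  have hmax : h ≤ max (k * max Rp Rm) h := le_max_right _ _
  have hnear : |x - a| ≤ max Rp Rm → V a + k * |x - a| - max (k * max Rp Rm) h ≤ V x :=
    fun hR => by
      have : k * |x - a| ≤ k * max Rp Rm := mul_le_mul_of_nonneg_left hR hk
      linarith [hmin x, le_max_left (k * max Rp Rm) h]
  rcases le_total a x with hax | hxa
  · rw [abs_of_nonneg (sub_nonneg.2 hax)] at hnear ⊢
    rcases le_total (x - a) Rp with hclose | hfar
    · exact hnear (hclose.trans (le_max_left _ _))
    · have := hsupp (x - a) hfar
      rw [add_sub_cancel] at this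
      linarith
  · rw [abs_of_nonpos (sub_nonpos.2 hxa), neg_sub] at hnear ⊢
    rcases le_total (a - x) Rm with hclose | hfar
    · exact hnear (hclose.trans (le_max_right _ _))
    · have := hsupm (a - x) hfar
      rw [sub_sub_cancel] at this
      linarith

lemma integrable_sq_mul_exp_neg (hVm : Measurable V) (hmin : ∀ x, V a ≤ V x)
    (hsupp : ∀ t, Rp ≤ t → k * t - h ≤ V (a + t) - V a)
    (hsupm : ∀ t, Rm ≤ t → k * t - h ≤ V (a - t) - V a) (hk : 0 < k) :
    Integrable fun x => x ^ 2 * exp (-V x) := by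
  refine integrable_sq_mul_of_abs_le_exp (by fun_prop) hk
    (C := exp (max (k * max Rp Rm) h - V a)) (a := a) fun x => ?_
  rw [abs_of_pos (exp_pos _), ← exp_add, exp_le_exp]
  linarith [add_mul_abs_sub_le_apply hmin hsupp hsupm hk.le x]

lemma integral_exp_neg_le (hint : Integrable fun x => exp (-V x)) (hmin : ∀ x, V a ≤ V x)
    (hsupp : ∀ t, Rp ≤ t → k * t - h ≤ V (a + t) - V a)
    (hsupm : ∀ t, Rm ≤ t → k * t - h ≤ V (a - t) - V a) (hk : 0 < k)
    (hRp : 0 ≤ Rp) (hRm : 0 ≤ Rm) :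
    ∫ x, exp (-V x) ≤ exp (-V a) * (Rp + Rm + 2 * exp h / k) := by
  have hexp : exp (h - V a) = exp (-V a) * exp h := by rw [← exp_add]; ring_nf
  refine (integral_le_of_le_exp_tails hint (by linarith : a - Rm ≤ a + Rp) hk
    (C := exp (h - V a)) (fun x hx => ?_) (fun x _ => exp_le_exp.2 (neg_le_neg (hmin x)))
    (fun x hx => ?_)).trans_eq (by rw [hexp]; ring)
  · have := hsupm (a - x) (by linarith)
    rw [sub_sub_cancel] at this
    rw [← exp_add, exp_le_exp]
    nlinarith
  · have := hsupp (x - a) (by linarith)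
    rw [add_sub_cancel] at this
    rw [← exp_add, exp_le_exp]
    nlinarith

lemma integral_exp_neg_le_of_superlinear {c : ℝ} (hint : Integrable fun x => exp (-V x))
    (hmin : ∀ x, V a ≤ V x)
    (hsupp : ∀ t, Rp ≤ t → (c / max Rp Rm) * t - h ≤ V (a + t) - V a)
    (hsupm : ∀ t, Rm ≤ t → (c / max Rp Rm) * t - h ≤ V (a - t) - V a) (hc : 0 < c)
    (hRp : 0 < Rp) (hRm : 0 < Rm) :
    ∫ x, exp (-V x) ≤ exp (-V a) * ((Rp + Rm) * (1 + 2 * exp h / c)) := by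
  have hR : 0 < max Rp Rm := lt_max_of_lt_left hRp
  have hRsum : max Rp Rm ≤ Rp + Rm := max_le (by linarith) (by linarith)
  calc ∫ x, exp (-V x) ≤ exp (-V a) * (Rp + Rm + 2 * exp h / (c / max Rp Rm)) :=
        integral_exp_neg_le hint hmin hsupp hsupm (div_pos hc hR) hRp.le hRm.le
    _ = exp (-V a) * (Rp + Rm + 2 * exp h / c * max Rp Rm) := by
        rw [div_div_eq_mul_div]; ring
    _ ≤ exp (-V a) * (Rp + Rm + 2 * exp h / c * (Rp + Rm)) := by gcongr
    _ = exp (-V a) * ((Rp + Rm) * (1 + 2 * exp h / c)) := by ring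

lemma le_integral_sq_mul_exp_neg (hint : Integrable fun x => x ^ 2 * exp (-V x))
    (hlevp : ∀ u, 0 ≤ u → u ≤ Rp → V (a + u) - V a ≤ β)
    (hlevm : ∀ u, 0 ≤ u → u ≤ Rm → V (a - u) - V a ≤ β)
    (hRp : 0 ≤ Rp) (hRm : 0 ≤ Rm) :
    exp (-(V a + β)) * ((Rp + Rm) * a ^ 2 / 4) ≤ ∫ x, x ^ 2 * exp (-V x) := by
  have hIcc :=
    mul_sq_div_four_le_integral_sq (by linarith : a - Rm ≤ a) (by linarith : a ≤ a + Rp)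
  rw [show a + Rp - (a - Rm) = Rp + Rm by ring] at hIcc
  calc exp (-(V a + β)) * ((Rp + Rm) * a ^ 2 / 4)
      ≤ exp (-(V a + β)) * ∫ x in Icc (a - Rm) (a + Rp), x ^ 2 := by gcongr
    _ = ∫ x in Icc (a - Rm) (a + Rp), exp (-(V a + β)) * x ^ 2 := (integral_const_mul _ _).symm
    _ ≤ ∫ x in Icc (a - Rm) (a + Rp), x ^ 2 * exp (-V x) := by
        refine setIntegral_mono_on ((by fun_prop : Continuous _).integrableOn_Icc)
          hint.integrableOn measurableSet_Icc fun x hx => ?_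
        rw [mul_comm]
        gcongr
        exact apply_le_add_of_mem_Icc hlevp hlevm hx
    _ ≤ ∫ x, x ^ 2 * exp (-V x) :=
        setIntegral_le_integral hint (.of_forall fun x => by positivity)

end Superlinear

theorem superlinear_argmin_bound_general
    (V : ℝ → ℝ) (hVm : Measurable V) (a : ℝ) (hmin : ∀ x, V a ≤ V x)
    (hint : Integrable fun x => Real.exp (-V x))
    (Z : ℝ) (hZ : Z = ∫ x, Real.exp (-V x))
    (μ : Measure ℝ)
    (hμ : μ = volume.withDensity fun x => ENNReal.ofReal (Real.exp (-V x) / Z))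
    (hcent : ∫ x, x ∂μ = 0)
    (β c h Rp Rm : ℝ) (hc : 0 < c)
    (hRp : 0 < Rp) (hRm : 0 < Rm)
    (hlevp : ∀ u, 0 ≤ u → u ≤ Rp → V (a + u) - V a ≤ β)
    (hlevm : ∀ u, 0 ≤ u → u ≤ Rm → V (a - u) - V a ≤ β)
    (hsupp : ∀ t, Rp ≤ t → (c / max Rp Rm) * t - h ≤ V (a + t) - V a)
    (hsupm : ∀ t, Rm ≤ t → (c / max Rp Rm) * t - h ≤ V (a - t) - V a) :
    a ^ 2 ≤
      4 * ((∫ x, x ^ 2 ∂μ) - (∫ x, x ∂μ) ^ 2) * Real.exp β * (1 + 2 * Real.exp h / c) := by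
  have hk : 0 < c / max Rp Rm := div_pos hc (lt_max_of_lt_left hRp)
  have hZpos : 0 < Z := hZ ▸ integral_exp_pos hint
  have hsq := integrable_sq_mul_exp_neg hVm hmin hsupp hsupm hk
  have hmoment : ∫ x, x ^ 2 ∂μ = (∫ x, x ^ 2 * exp (-V x)) / Z := by
    rw [hμ, integral_withDensity_ofReal (by fun_prop) fun x => by positivity, ← integral_div]
    congr 1 with x
    ring
  have hZle : Z ≤ exp (-V a) * ((Rp + Rm) * (1 + 2 * exp h / c)) :=
    hZ ▸ integral_exp_neg_le_of_superlinear hint hmin hsupp hsupm hc hRp hRm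
  have hlow := le_integral_sq_mul_exp_neg hsq hlevp hlevm hRp.le hRm.le
  have hexp : exp (-(V a + β)) * exp β = exp (-V a) := by rw [← exp_add]; ring_nf
  rw [hcent, hmoment, zero_pow two_ne_zero, sub_zero, mul_div_assoc', div_mul_eq_mul_div,
    div_mul_eq_mul_div, le_div_iff₀ hZpos]
  calc a ^ 2 * Z ≤ a ^ 2 * (exp (-V a) * ((Rp + Rm) * (1 + 2 * exp h / c))) := by gcongr
    _ = 4 * (exp (-(V a + β)) * ((Rp + Rm) * a ^ 2 / 4)) * exp β * (1 + 2 * exp h / c) := by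
        rw [← hexp]; ring
    _ ≤ 4 * (∫ x, x ^ 2 * exp (-V x)) * exp β * (1 + 2 * exp h / c) := by gcongr

/-- Let `μ = Z⁻¹ e^{-V} dx` be a centered probability measure on `ℝ`, `V`
attaining its minimum at `a`, and `V` `β`-superlinear with constants `c_β > 0`, `h_β ≥ 0`
relative to `R₊(β), R₋(β) > 0` and `R(β) = max(R₊, R₋)`.  Then the location of the minimum
satisfies `a² ≤ 4 Var_μ(x) e^β (1 + 2 e^{h_β}/c_β)`. -/
theorem superlinear_argmin_bound
    (V : ℝ → ℝ) (hVm : Measurable V) (a : ℝ) (hmin : ∀ x, V a ≤ V x)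
    (hint : Integrable fun x => Real.exp (-V x))
    (Z : ℝ) (hZ : Z = ∫ x, Real.exp (-V x))
    (μ : Measure ℝ)
    (hμ : μ = volume.withDensity fun x => ENNReal.ofReal (Real.exp (-V x) / Z))
    (hcent : ∫ x, x ∂μ = 0)
    (β c h Rp Rm : ℝ) (hβ : 0 < β) (hc : 0 < c) (hh : 0 ≤ h)
    (hRp : 0 < Rp) (hRm : 0 < Rm)
    (hlevp : ∀ u, 0 ≤ u → u ≤ Rp → V (a + u) - V a ≤ β)
    (hlevm : ∀ u, 0 ≤ u → u ≤ Rm → V (a - u) - V a ≤ β)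
    (hsupp : ∀ t, Rp ≤ t → (c / max Rp Rm) * t - h ≤ V (a + t) - V a)
    (hsupm : ∀ t, Rm ≤ t → (c / max Rp Rm) * t - h ≤ V (a - t) - V a) :
    a ^ 2 ≤
      4 * ((∫ x, x ^ 2 ∂μ) - (∫ x, x ∂μ) ^ 2) * Real.exp β * (1 + 2 * Real.exp h / c) :=
  superlinear_argmin_bound_general V hVm a hmin hint Z hZ μ hμ hcent β c h Rp Rm hc hRp hRm hlevp
    hlevm hsupp hsupm
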